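/- Let m, n be positive naturals, r = min(m, n), and let F : ℝ^{m×n} → ℝ be differentiable with L-Lipschitz gradient with respect to the Frobenius norm and bounded below by F*. Let T ≥ 1, η > 0, and 0 ≤ λ ≤ 1/(2(1+T)·η·√r). Let W₀, …, W_{T+1} and M₁, …, M_{T+1} be real m×n matrices with ‖W₀‖_F ≤ η·√r, and for each 1 ≤ t ≤ T+1 suppose W_t = (1 − ηλ)·W_{t−1} − η·U_t·V_tᵀ where U_t is an m×r matrix with U_tᵀU_t = I_r, V_t is an n×r matrix with V_tᵀV_t = I_r, and ⟨M_t, U_t·V_tᵀ⟩ = ‖M_t‖_*. Then (1/(T+1))·Σ_{t=0}^{T} ‖∇F(W_t)‖_F ≤ 2·(F(W₀) − F*)/(T·η) + (4√r/(T+1))·Σ_{t=0}^{T} ‖∇F(W_t) − M_{t+1}‖_F + L·η·(√r + 1/2)². -/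

import Mathlib

open Matrix

/-- Frobenius norm of a real matrix: `√ tr(Aᵀ A)`. -/
noncomputable def frobNorm {m n : ℕ} (A : Matrix (Fin m) (Fin n) ℝ) : ℝ :=
  Real.sqrt ((Aᵀ * A).trace)

/-- Nuclear norm of a real matrix: the trace of the positive semidefinite
square root of `MᵀM` (over `ℝ`, `Mᴴ = Mᵀ`). -/
noncomputable def nuclearNorm {m n : ℕ} (M : Matrix (Fin m) (Fin n) ℝ) : ℝ :=
  (((Matrix.posSemidef_conjTranspose_mul_self M).1.eigenvectorUnitary : Matrix (Fin n) (Fin n) ℝ) *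
    diagonal (RCLike.ofReal ∘ Real.sqrt ∘ (Matrix.posSemidef_conjTranspose_mul_self M).1.eigenvalues) *
    (star (Matrix.posSemidef_conjTranspose_mul_self M).1.eigenvectorUnitary : Matrix (Fin n) (Fin n) ℝ)).trace

attribute [local instance] Matrix.frobeniusNormedAddCommGroup Matrix.frobeniusNormedSpace

/-- The continuous linear functional `W ↦ ⟨G, W⟩ = tr(Gᵀ·W)` given by the
Frobenius inner product with `G`. -/
noncomputable def frobInnerCLM {m n : ℕ} (G : Matrix (Fin m) (Fin n) ℝ) :
    Matrix (Fin m) (Fin n) ℝ →L[ℝ] ℝ :=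
  LinearMap.toContinuousLinearMap
    { toFun := fun W => (Gᵀ * W).trace
      map_add' := by intro a b; simp [Matrix.mul_add]
      map_smul' := by intro c a; simp [Matrix.mul_smul] }

/-!
The orthogonalized direction `UVᵀ` has Frobenius norm `√r` and is aligned with the momentum:
`⟨M, UVᵀ⟩ = ‖M‖_* ≥ ‖M‖_F`, hence `⟨∇F, UVᵀ⟩ ≥ ‖∇F‖_F - (1 + √r) ‖∇F - M‖_F`. The iterates grow
by at most `η√r` per step, so the step-size condition keeps `λ ‖W_t‖_F ≤ 1/2` and weight decay
eats at most half of the descent. The descent lemma for `L`-smooth functions then yields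
`η/2 ‖∇F(W_t)‖_F ≤ F(W_t) - F(W_{t+1}) + η (1 + √r) ‖∇F(W_t) - M_{t+1}‖_F + L/2 (η (√r + 1/2))²`,
and the claim follows by telescoping over `t ≤ T`.
-/

open Finset

theorem descent_lemma {E : Type*} [NormedAddCommGroup E] [NormedSpace ℝ E] {f : E → ℝ}
    {f' : E → E →L[ℝ] ℝ} {L : ℝ} (hf : ∀ x, HasFDerivAt f (f' x) x)
    (hL : ∀ x y d, f' x d - f' y d ≤ L * ‖x - y‖ * ‖d‖) (x d : E) :
    f (x + d) ≤ f x + f' x d + L / 2 * ‖d‖ ^ 2 := by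
  set φ : ℝ → ℝ := fun s => f (x + s • d) - s * f' x d - L / 2 * ‖d‖ ^ 2 * s ^ 2
  have hφ : ∀ s, HasDerivAt φ (f' (x + s • d) d - f' x d - L * ‖d‖ ^ 2 * s) s := by
    intro s
    have hline : HasDerivAt (fun s : ℝ => x + s • d) d s := by
      simpa using ((hasDerivAt_id s).smul_const d).const_add x
    refine ((((hf _).comp_hasDerivAt s hline).sub ((hasDerivAt_id s).mul_const (f' x d))).sub
      ((hasDerivAt_pow 2 s).const_mul (L / 2 * ‖d‖ ^ 2))).congr_deriv ?_
    simp only [one_mul, Nat.cast_ofNat]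
    ring
  have hφ'_nonpos : ∀ s ∈ interior (Set.Icc (0 : ℝ) 1),
      f' (x + s • d) d - f' x d - L * ‖d‖ ^ 2 * s ≤ 0 := by
    intro s hs
    rw [interior_Icc] at hs
    have hs0 : 0 ≤ s := hs.1.le
    suffices f' (x + s • d) d - f' x d ≤ L * ‖d‖ ^ 2 * s by linarith
    calc f' (x + s • d) d - f' x d ≤ L * ‖x + s • d - x‖ * ‖d‖ := hL _ _ d
      _ = L * ‖d‖ ^ 2 * s := by
          rw [add_sub_cancel_left, norm_smul, Real.norm_of_nonneg hs0]; ring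
  have hanti : AntitoneOn φ (Set.Icc 0 1) :=
    antitoneOn_of_hasDerivWithinAt_nonpos (convex_Icc 0 1)
      (HasDerivAt.continuousOn fun s _ => hφ s) (fun s _ => (hφ s).hasDerivWithinAt) hφ'_nonpos
  have h := hanti (by simp) (by simp) zero_le_one
  norm_num [φ] at h
  linarith

section Frobenius

variable {m n : ℕ}

lemma trace_transpose_mul_eq_sum (A B : Matrix (Fin m) (Fin n) ℝ) :
    (Aᵀ * B).trace = ∑ i, ∑ j, A i j * B i j := by
  simp only [Matrix.trace, Matrix.diag, Matrix.mul_apply, Matrix.transpose_apply]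
  exact sum_comm

lemma frobNorm_eq_norm (A : Matrix (Fin m) (Fin n) ℝ) : frobNorm A = ‖A‖ := by
  rw [frobNorm, trace_transpose_mul_eq_sum, Matrix.frobenius_norm_def, ← Real.sqrt_eq_rpow]
  simp only [Real.norm_eq_abs, Real.rpow_two, sq, abs_mul_abs_self]

lemma trace_transpose_mul_le (A B : Matrix (Fin m) (Fin n) ℝ) :
    (Aᵀ * B).trace ≤ ‖A‖ * ‖B‖ := by
  rw [← frobNorm_eq_norm, ← frobNorm_eq_norm, frobNorm, frobNorm, trace_transpose_mul_eq_sum,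
    trace_transpose_mul_eq_sum, trace_transpose_mul_eq_sum]
  simpa only [Fintype.sum_prod_type, sq] using
    Real.sum_mul_le_sqrt_mul_sqrt univ (fun p : Fin m × Fin n => A p.1 p.2) (fun p => B p.1 p.2)

lemma abs_trace_transpose_mul_le (A B : Matrix (Fin m) (Fin n) ℝ) :
    |(Aᵀ * B).trace| ≤ ‖A‖ * ‖B‖ := by
  have h := trace_transpose_mul_le (-A) B
  rw [Matrix.transpose_neg, Matrix.neg_mul, Matrix.trace_neg, norm_neg] at h
  exact abs_le.2 ⟨by linarith, trace_transpose_mul_le A B⟩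

lemma norm_mul_transpose_of_orthonormal {r : ℕ} {U : Matrix (Fin m) (Fin r) ℝ}
    {V : Matrix (Fin n) (Fin r) ℝ} (hU : Uᵀ * U = 1) (hV : Vᵀ * V = 1) :
    ‖U * Vᵀ‖ = √r := by
  have h : (U * Vᵀ)ᵀ * (U * Vᵀ) = V * Vᵀ := by
    rw [Matrix.transpose_mul, Matrix.transpose_transpose, Matrix.mul_assoc,
      ← Matrix.mul_assoc Uᵀ, hU, Matrix.one_mul]
  rw [← frobNorm_eq_norm, frobNorm, h, Matrix.trace_mul_comm, hV, Matrix.trace_one,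
    Fintype.card_fin]

lemma norm_le_nuclearNorm (M : Matrix (Fin m) (Fin n) ℝ) : ‖M‖ ≤ nuclearNorm M := by
  set hA := (Matrix.posSemidef_conjTranspose_mul_self M).1
  have hnonneg : ∀ i, 0 ≤ hA.eigenvalues i :=
    (Matrix.posSemidef_conjTranspose_mul_self M).eigenvalues_nonneg
  have hnuc : nuclearNorm M = ∑ i, √(hA.eigenvalues i) := by
    rw [nuclearNorm, Matrix.trace_mul_cycle, Unitary.star_mul_self_of_mem hA.eigenvectorUnitary.2,
      Matrix.one_mul, Matrix.trace_diagonal]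
    rfl
  have htr : (Mᵀ * M).trace = ∑ i, √(hA.eigenvalues i) ^ 2 := by
    rw [← Matrix.conjTranspose_eq_transpose_of_trivial, hA.trace_eq_sum_eigenvalues]
    simp only [RCLike.ofReal_real_eq_id, id]
    exact sum_congr rfl fun i _ => (Real.sq_sqrt (hnonneg i)).symm
  rw [← frobNorm_eq_norm, frobNorm, htr, hnuc]
  calc √(∑ i, √(hA.eigenvalues i) ^ 2) ≤ √((∑ i, √(hA.eigenvalues i)) ^ 2) :=
        Real.sqrt_le_sqrt (sum_sq_le_sq_sum_of_nonneg fun i _ => Real.sqrt_nonneg _)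
    _ = ∑ i, √(hA.eigenvalues i) := Real.sqrt_sq (sum_nonneg fun i _ => Real.sqrt_nonneg _)

end Frobenius

lemma lipschitz_const_nonneg {E F : Type*} [NormedAddCommGroup E] [Nontrivial E]
    [SeminormedAddCommGroup F] {g : E → F} {L : ℝ} (hg : ∀ x y, ‖g x - g y‖ ≤ L * ‖x - y‖) :
    0 ≤ L := by
  obtain ⟨x, hx⟩ := exists_ne (0 : E)
  have h := (norm_nonneg _).trans (hg x 0)
  rw [sub_zero] at h
  exact nonneg_of_mul_nonneg_left h (norm_pos_iff.2 hx)

lemma le_add_one_mul_of_le_add {a : ℕ → ℝ} {c : ℝ} {N : ℕ} (h0 : a 0 ≤ c)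
    (hsucc : ∀ t < N, a (t + 1) ≤ a t + c) : ∀ t ≤ N, a t ≤ (t + 1) * c := by
  intro t ht
  induction t with
  | zero => simpa using h0
  | succ t ih =>
    push_cast
    linarith [ih (by omega), hsucc t (by omega)]

section Muon

variable {m n r : ℕ}

lemma matrix_descent_lemma {F : Matrix (Fin m) (Fin n) ℝ → ℝ}
    {gradF : Matrix (Fin m) (Fin n) ℝ → Matrix (Fin m) (Fin n) ℝ} {L : ℝ}
    (hdiff : ∀ X, HasFDerivAt F (frobInnerCLM (gradF X)) X)
    (hLip : ∀ X Y, ‖gradF X - gradF Y‖ ≤ L * ‖X - Y‖) (X D : Matrix (Fin m) (Fin n) ℝ) :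
    F (X + D) ≤ F X + ((gradF X)ᵀ * D).trace + L / 2 * ‖D‖ ^ 2 :=
  descent_lemma hdiff (fun X Y D => by
    change ((gradF X)ᵀ * D).trace - ((gradF Y)ᵀ * D).trace ≤ _
    rw [← Matrix.trace_sub, ← Matrix.sub_mul, ← Matrix.transpose_sub]
    exact (trace_transpose_mul_le _ D).trans
      (mul_le_mul_of_nonneg_right (hLip X Y) (norm_nonneg D)))
    X D

lemma norm_sub_mul_norm_sub_le_trace_transpose_mul {G M : Matrix (Fin m) (Fin n) ℝ}
    {U : Matrix (Fin m) (Fin r) ℝ} {V : Matrix (Fin n) (Fin r) ℝ} (hU : Uᵀ * U = 1)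
    (hV : Vᵀ * V = 1) (hMUV : (Mᵀ * (U * Vᵀ)).trace = nuclearNorm M) :
    ‖G‖ - (1 + √r) * ‖G - M‖ ≤ (Gᵀ * (U * Vᵀ)).trace := by
  have hsplit : (Gᵀ * (U * Vᵀ)).trace = ((G - M)ᵀ * (U * Vᵀ)).trace + (Mᵀ * (U * Vᵀ)).trace := by
    rw [Matrix.transpose_sub, Matrix.sub_mul, Matrix.trace_sub, sub_add_cancel]
  have herr := neg_abs_le ((G - M)ᵀ * (U * Vᵀ)).trace
  rw [← norm_mul_transpose_of_orthonormal hU hV]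
  linarith [abs_trace_transpose_mul_le (G - M) (U * Vᵀ), norm_le_nuclearNorm M,
    norm_sub_norm_le G M]

lemma norm_muon_step_le {η lam : ℝ} (hη : 0 ≤ η) (hlam : 0 ≤ lam) (W : Matrix (Fin m) (Fin n) ℝ)
    {U : Matrix (Fin m) (Fin r) ℝ} {V : Matrix (Fin n) (Fin r) ℝ} (hU : Uᵀ * U = 1)
    (hV : Vᵀ * V = 1) :
    ‖-(η * lam) • W - η • (U * Vᵀ)‖ ≤ η * lam * ‖W‖ + η * √r := by
  refine (norm_sub_le _ _).trans_eq ?_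
  rw [norm_smul, norm_smul, norm_neg, norm_mul_transpose_of_orthonormal hU hV,
    Real.norm_of_nonneg hη, Real.norm_of_nonneg (mul_nonneg hη hlam)]

lemma norm_muon_update_le_add {η lam : ℝ} (hη : 0 ≤ η) (hηlam₀ : 0 ≤ η * lam)
    (hηlam₁ : η * lam ≤ 1) (W : Matrix (Fin m) (Fin n) ℝ) {U : Matrix (Fin m) (Fin r) ℝ}
    {V : Matrix (Fin n) (Fin r) ℝ} (hU : Uᵀ * U = 1) (hV : Vᵀ * V = 1) :
    ‖(1 - η * lam) • W - η • (U * Vᵀ)‖ ≤ ‖W‖ + η * √r := by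
  refine (norm_sub_le _ _).trans ?_
  rw [norm_smul, norm_smul, norm_mul_transpose_of_orthonormal hU hV, Real.norm_of_nonneg hη,
    Real.norm_of_nonneg (by linarith)]
  nlinarith [norm_nonneg W]

lemma muon_step_descent {F : Matrix (Fin m) (Fin n) ℝ → ℝ}
    {gradF : Matrix (Fin m) (Fin n) ℝ → Matrix (Fin m) (Fin n) ℝ} {L : ℝ}
    (hdiff : ∀ X, HasFDerivAt F (frobInnerCLM (gradF X)) X)
    (hLip : ∀ X Y, ‖gradF X - gradF Y‖ ≤ L * ‖X - Y‖) (hL : 0 ≤ L) {η lam : ℝ} (hη : 0 ≤ η)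
    (hlam : 0 ≤ lam) {W W' M : Matrix (Fin m) (Fin n) ℝ} {U : Matrix (Fin m) (Fin r) ℝ}
    {V : Matrix (Fin n) (Fin r) ℝ} (hU : Uᵀ * U = 1) (hV : Vᵀ * V = 1)
    (hMUV : (Mᵀ * (U * Vᵀ)).trace = nuclearNorm M)
    (hW' : W' = (1 - η * lam) • W - η • (U * Vᵀ)) (hlamW : lam * ‖W‖ ≤ 1 / 2) :
    η / 2 * ‖gradF W‖ ≤
      F W - F W' + (η * (1 + √r) * ‖gradF W - M‖ + L / 2 * (η * (√r + 1 / 2)) ^ 2) := by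
  set G := gradF W
  set D := -(η * lam) • W - η • (U * Vᵀ)
  have hW'D : W' = W + D := by rw [hW']; module
  have hinner : (Gᵀ * D).trace = -(η * lam) * (Gᵀ * W).trace - η * (Gᵀ * (U * Vᵀ)).trace := by
    simp only [D, Matrix.mul_sub, Matrix.mul_smul, Matrix.trace_sub, Matrix.trace_smul, smul_eq_mul]
  have hdecay : -(η * lam) * (Gᵀ * W).trace ≤ η / 2 * ‖G‖ := by
    have := neg_abs_le (Gᵀ * W).trace
    nlinarith [abs_trace_transpose_mul_le G W, mul_nonneg hη hlam, mul_nonneg hη (norm_nonneg G)]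
  have halign := mul_le_mul_of_nonneg_left
    (norm_sub_mul_norm_sub_le_trace_transpose_mul (G := G) hU hV hMUV) hη
  have hD : ‖D‖ ≤ η * (√r + 1 / 2) := by
    nlinarith [norm_muon_step_le hη hlam W hU hV]
  have hD2 : L / 2 * ‖D‖ ^ 2 ≤ L / 2 * (η * (√r + 1 / 2)) ^ 2 := by gcongr
  have hdes := matrix_descent_lemma hdiff hLip W D
  rw [← hW'D, hinner] at hdes
  linarith

end Muon

lemma average_le_of_telescoped {T : ℕ} (hT : 1 ≤ T) {η s L Δ S₁ S₂ : ℝ} (hη : 0 < η) (hs : 1 ≤ s)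
    (hΔ : 0 ≤ Δ) (hS₂ : 0 ≤ S₂)
    (h : η / 2 * S₁ ≤ Δ + (η * (1 + s) * S₂ + (T + 1) * (L / 2 * (η * (s + 1 / 2)) ^ 2))) :
    1 / ((T : ℝ) + 1) * S₁ ≤
      2 * Δ / (T * η) + 4 * s / (T + 1) * S₂ + L * η * (s + 1 / 2) ^ 2 := by
  have hT' : (1 : ℝ) ≤ T := by exact_mod_cast hT
  have hscale : 0 ≤ 2 / (η * (T + 1)) := by positivity
  calc 1 / ((T : ℝ) + 1) * S₁ = 2 / (η * (T + 1)) * (η / 2 * S₁) := by field_simp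
    _ ≤ 2 / (η * (T + 1)) * (Δ + (η * (1 + s) * S₂ + (T + 1) * (L / 2 * (η * (s + 1 / 2)) ^ 2))) :=
        mul_le_mul_of_nonneg_left h hscale
    _ = 2 * Δ / (η * (T + 1)) + 2 * (1 + s) / (T + 1) * S₂ + L * η * (s + 1 / 2) ^ 2 := by
        field_simp
        ring
    _ ≤ 2 * Δ / (T * η) + 4 * s / (T + 1) * S₂ + L * η * (s + 1 / 2) ^ 2 := by
        gcongr 2 * Δ / ?_ + ?_ / _ * S₂ + _
        · nlinarith
        · linarith

lemma mul_le_half_of_le_one_div {lam c x : ℝ} (hlam0 : 0 ≤ lam) (hc : 0 < c)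
    (hlam : lam ≤ 1 / (2 * c)) (hx : x ≤ c) : lam * x ≤ 1 / 2 :=
  calc lam * x ≤ lam * c := mul_le_mul_of_nonneg_left hx hlam0
    _ ≤ 1 / (2 * c) * c := mul_le_mul_of_nonneg_right hlam hc.le
    _ = 1 / 2 := by field_simp

/-- Deterministic (trajectory-wise) convergence bound for Muon/MiMuon
(the paper's Theorem 3 with the momentum-approximation error kept explicit). -/
theorem stmt_11 {m n : ℕ} (hm : 0 < m) (hn : 0 < n) (r : ℕ) (hr : r = min m n)
    (F : Matrix (Fin m) (Fin n) ℝ → ℝ)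
    (gradF : Matrix (Fin m) (Fin n) ℝ → Matrix (Fin m) (Fin n) ℝ) (L Fstar : ℝ)
    (hdiff : ∀ X, HasFDerivAt F (frobInnerCLM (gradF X)) X)
    (hLip : ∀ X Y, frobNorm (gradF X - gradF Y) ≤ L * frobNorm (X - Y))
    (hFstar : ∀ X, Fstar ≤ F X)
    (T : ℕ) (hT : 1 ≤ T) (η lam : ℝ) (hη : 0 < η)
    (hlam0 : 0 ≤ lam) (hlam : lam ≤ 1 / (2 * (1 + (T : ℝ)) * η * Real.sqrt r))
    (W M : ℕ → Matrix (Fin m) (Fin n) ℝ)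
    (U : ℕ → Matrix (Fin m) (Fin r) ℝ) (V : ℕ → Matrix (Fin n) (Fin r) ℝ)
    (hW0 : frobNorm (W 0) ≤ η * Real.sqrt r)
    (hU : ∀ t, 1 ≤ t → t ≤ T + 1 → (U t)ᵀ * U t = 1)
    (hV : ∀ t, 1 ≤ t → t ≤ T + 1 → (V t)ᵀ * V t = 1)
    (hMUV : ∀ t, 1 ≤ t → t ≤ T + 1 → ((M t)ᵀ * (U t * (V t)ᵀ)).trace = nuclearNorm (M t))
    (hrec : ∀ t, 1 ≤ t → t ≤ T + 1 →
      W t = (1 - η * lam) • W (t - 1) - η • (U t * (V t)ᵀ)) :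
    (1 / ((T : ℝ) + 1)) * ∑ t ∈ Finset.range (T + 1), frobNorm (gradF (W t)) ≤
      2 * (F (W 0) - Fstar) / ((T : ℝ) * η) +
      (4 * Real.sqrt r / ((T : ℝ) + 1)) *
        ∑ t ∈ Finset.range (T + 1), frobNorm (gradF (W t) - M (t + 1)) +
      L * η * (Real.sqrt r + 1 / 2) ^ 2 := by
  simp only [frobNorm_eq_norm] at hLip hW0 ⊢
  have hs : 1 ≤ √(r : ℝ) := Real.one_le_sqrt.2 (by norm_cast; omega)
  have hL : 0 ≤ L := by
    have : Nonempty (Fin m) := ⟨⟨0, hm⟩⟩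
    have : Nonempty (Fin n) := ⟨⟨0, hn⟩⟩
    exact lipschitz_const_nonneg hLip
  have hc : 0 < (1 + T) * (η * √r) := by positivity
  have hlam' : lam ≤ 1 / (2 * ((1 + T) * (η * √r))) := by convert hlam using 2; ring
  have hηlam : η * lam ≤ 1 := by
    have hη_le : η ≤ (1 + T) * (η * √r) := by
      have := one_le_mul_of_one_le_of_one_le (le_add_of_nonneg_right (Nat.cast_nonneg T)) hs
      nlinarith
    linarith [mul_le_half_of_le_one_div hlam0 hc hlam' hη_le]
  have hWt : ∀ t ≤ T + 1, ‖W t‖ ≤ (t + 1) * (η * √r) :=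
    le_add_one_mul_of_le_add (a := fun t => ‖W t‖) hW0 fun t ht => by
      rw [hrec (t + 1) le_add_self ht, Nat.add_sub_cancel]
      exact norm_muon_update_le_add hη.le (mul_nonneg hη.le hlam0) hηlam _
        (hU _ le_add_self ht) (hV _ le_add_self ht)
  have hstep : ∀ k ∈ range (T + 1), η / 2 * ‖gradF (W k)‖ ≤ F (W k) - F (W (k + 1)) +
      (η * (1 + √r) * ‖gradF (W k) - M (k + 1)‖ + L / 2 * (η * (√r + 1 / 2)) ^ 2) := by
    intro k hk
    have hk : k + 1 ≤ T + 1 := Nat.succ_le_succ (mem_range_succ_iff.1 hk)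
    refine muon_step_descent hdiff hLip hL hη.le hlam0 (hU _ le_add_self hk) (hV _ le_add_self hk)
      (hMUV _ le_add_self hk) (hrec _ le_add_self hk) (mul_le_half_of_le_one_div hlam0 hc hlam' ?_)
    have hkT : (k : ℝ) + 1 ≤ 1 + T := by rw [add_comm 1 (T : ℝ)]; exact_mod_cast hk
    exact (hWt k (by omega)).trans (by gcongr)
  have hsum := sum_le_sum hstep
  rw [← mul_sum, sum_add_distrib, sum_range_sub', sum_add_distrib, ← mul_sum, sum_const,
    card_range, nsmul_eq_mul, Nat.cast_add_one] at hsum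
  exact average_le_of_telescoped hT hη hs (sub_nonneg.2 (hFstar _))
    (sum_nonneg fun _ _ => norm_nonneg _) (by linarith [hFstar (W (T + 1))])
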